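/- arXiv:0807.1593 — 7 statements merged into one kernel-verified Lean document; each statement's English description precedes it below -/
import Mathlib

section
/- Let X be a set, h : X × X → ℝ satisfy the triangle inequality, and let u, v : X → ℝ both satisfy f(y) − f(x) ≤ h(x,y) for all x, y (for f = u and f = v). Let θ : ℝ → ℝ be a nondecreasing 1-Lipschitz function. Then w := u + θ ∘ (v − u) also satisfies w(y) − w(x) ≤ h(x,y) for all x, y. -/
lemma Monotone.sub_le_max_sub_zero {θ : ℝ → ℝ} (hmono : Monotone θ)
    (hlip : ∀ s t : ℝ, |θ s - θ t| ≤ |s - t|) (s t : ℝ) :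
    θ s - θ t ≤ max (s - t) 0 := by
  rcases le_total s t with hst | hts
  · exact (sub_nonpos.2 (hmono hst)).trans (le_max_right _ _)
  · calc θ s - θ t ≤ |θ s - θ t| := le_abs_self _
      _ ≤ |s - t| := hlip s t
      _ = s - t := abs_of_nonneg (sub_nonneg.2 hts)
      _ ≤ max (s - t) 0 := le_max_left _ _

theorem stmt_3_general {X : Type*} (h : X → X → ℝ) (u v : X → ℝ) (θ : ℝ → ℝ)
    (hu : ∀ x y, u y - u x ≤ h x y)
    (hv : ∀ x y, v y - v x ≤ h x y)
    (hθmono : Monotone θ)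
    (hθlip : ∀ s t : ℝ, |θ s - θ t| ≤ |s - t|)
    (w : X → ℝ) (hw : ∀ x, w x = u x + θ (v x - u x)) :
    ∀ x y, w y - w x ≤ h x y := by
  intro x y
  have hθ := hθmono.sub_le_max_sub_zero hθlip (v y - u y) (v x - u x)
  -- `max (v y - v x) (u y - u x) ≤ h x y`, shifted by `u y - u x`
  have hmax : max (v y - u y - (v x - u x)) 0 ≤ h x y - (u y - u x) :=
    max_le (by linarith [hv x y]) (by linarith [hu x y])
  rw [hw, hw]
  linarith

theorem stmt_3 {X : Type*} (h : X → X → ℝ) (u v : X → ℝ) (θ : ℝ → ℝ)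
    (htri : ∀ x y z, h x z ≤ h x y + h y z)
    (hu : ∀ x y, u y - u x ≤ h x y)
    (hv : ∀ x y, v y - v x ≤ h x y)
    (hθmono : Monotone θ)
    (hθlip : ∀ s t : ℝ, |θ s - θ t| ≤ |s - t|)
    (w : X → ℝ) (hw : ∀ x, w x = u x + θ (v x - u x)) :
    ∀ x y, w y - w x ≤ h x y :=
  stmt_3_general h u v θ hu hv hθmono hθlip w hw
end

section
/- Let A ⊆ ℝ be a measurable set of positive Lebesgue measure, and let θ(t) = ∫₀ᵗ 1_A(s) ds be a primitive of the indicator of A. Then θ is nondecreasing and 1-Lipschitz, and the image θ(A) has positive Lebesgue measure. -/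
/-!
For `a ≤ b` we have `θ b - θ a = |A ∩ (a, b]|`, which gives monotonicity and the Lipschitz
bound. By the Lebesgue differentiation theorem `θ' = 0` almost everywhere off `A`, and a
Lipschitz map sends null sets to null sets, so `θ(ℝ \ A)` is null. By the intermediate value
theorem `θ(ℝ)` contains the interval `[θ(-n), θ n]` of length `|A ∩ (-n, n]|`; hence
`|θ(A)| = |θ(ℝ)| ≥ |A| > 0`.
-/

open MeasureTheory Set

theorem LipschitzWith.volume_image_eq_zero {f : ℝ → ℝ} {K : NNReal} (hf : LipschitzWith K f)
    {s : Set ℝ} (hs : volume s = 0) : volume (f '' s) = 0 := by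
  have h := hf.hausdorffMeasure_image_le zero_le_one s
  rwa [hausdorffMeasure_real, hs, mul_zero, nonpos_iff_eq_zero] at h

theorem LipschitzWith.volume_image_eq_zero_of_ae_hasDerivAt_zero {f : ℝ → ℝ} {K : NNReal}
    (hf : LipschitzWith K f) {s : Set ℝ} (hs : ∀ᵐ x, x ∈ s → HasDerivAt f 0 x) :
    volume (f '' s) = 0 := by
  set E := {x | x ∈ s → HasDerivAt f 0 x}
  have hE : volume Eᶜ = 0 := hs
  have h_good : volume (f '' (s ∩ E)) = 0 :=
    addHaar_image_eq_zero_of_det_fderivWithin_eq_zero volume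
      (fun x hx => (hx.2 hx.1).hasFDerivAt.hasFDerivWithinAt) (fun _ _ => by simp)
  have h_bad : volume (f '' (s \ E)) = 0 :=
    hf.volume_image_eq_zero (measure_mono_null (fun _ hx => hx.2) hE)
  rw [← inter_union_sdiff s E, image_union]
  exact measure_union_null h_good h_bad

theorem intervalIntegral_indicator_one_of_le {μ : Measure ℝ} {A : Set ℝ}
    (hA : MeasurableSet A) {a b : ℝ} (hab : a ≤ b) :
    ∫ s in a..b, A.indicator 1 s ∂μ = μ.real (A ∩ Ioc a b) := by
  rw [intervalIntegral.integral_of_le hab, integral_indicator_one hA,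
    measureReal_restrict_apply hA]

section PrimitiveOfIndicator

variable {A : Set ℝ} {θ : ℝ → ℝ}

theorem sub_eq_volume_real_of_primitive_indicator (hA : MeasurableSet A)
    (hθ : ∀ t, θ t = ∫ s in (0 : ℝ)..t, A.indicator 1 s) {a b : ℝ} (hab : a ≤ b) :
    θ b - θ a = volume.real (A ∩ Ioc a b) := by
  have hloc : LocallyIntegrable (A.indicator (1 : ℝ → ℝ)) volume :=
    (locallyIntegrable_const 1).indicator hA
  have hint (x y : ℝ) : IntervalIntegrable (A.indicator 1) volume x y :=
    (hloc.integrableOn_isCompact isCompact_uIcc).intervalIntegrable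
  rw [hθ, hθ, intervalIntegral.integral_interval_sub_left (hint 0 b) (hint 0 a),
    intervalIntegral_indicator_one_of_le hA hab]

theorem monotone_of_primitive_indicator (hA : MeasurableSet A)
    (hθ : ∀ t, θ t = ∫ s in (0 : ℝ)..t, A.indicator 1 s) : Monotone θ := fun _ _ hab =>
  sub_nonneg.mp ((sub_eq_volume_real_of_primitive_indicator hA hθ hab).symm ▸ measureReal_nonneg)

theorem lipschitzWith_one_of_primitive_indicator (hA : MeasurableSet A)
    (hθ : ∀ t, θ t = ∫ s in (0 : ℝ)..t, A.indicator 1 s) : LipschitzWith 1 θ := by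
  refine LipschitzWith.of_le_add fun x y => ?_
  rcases le_total x y with hxy | hyx
  · linarith [monotone_of_primitive_indicator hA hθ hxy, dist_nonneg (x := x) (y := y)]
  · have h_le : volume.real (A ∩ Ioc y x) ≤ volume.real (Ioc y x) :=
      measureReal_mono inter_subset_right measure_Ioc_lt_top.ne
    rw [Real.volume_real_Ioc_of_le hyx] at h_le
    linarith [sub_eq_volume_real_of_primitive_indicator hA hθ hyx, Real.dist_eq x y,
      le_abs_self (x - y)]

theorem volume_image_compl_eq_zero_of_primitive_indicator (hA : MeasurableSet A)
    (hθ : ∀ t, θ t = ∫ s in (0 : ℝ)..t, A.indicator 1 s) : volume (θ '' Aᶜ) = 0 := by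
  have hloc : LocallyIntegrable (A.indicator (1 : ℝ → ℝ)) volume :=
    (locallyIntegrable_const 1).indicator hA
  apply (lipschitzWith_one_of_primitive_indicator hA hθ).volume_image_eq_zero_of_ae_hasDerivAt_zero
  filter_upwards [LocallyIntegrable.ae_hasDerivAt_integral hloc] with x hx hxA
  rw [funext hθ]
  simpa [indicator_of_notMem hxA] using hx 0

theorem volume_le_volume_image_of_primitive_indicator (hA : MeasurableSet A)
    (hθ : ∀ t, θ t = ∫ s in (0 : ℝ)..t, A.indicator 1 s) : volume A ≤ volume (θ '' A) := by
  have h_range : volume (range θ) ≤ volume (θ '' A) := by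
    rw [← image_univ, ← union_compl_self A, image_union]
    exact (measure_union_le _ _).trans
      (by rw [volume_image_compl_eq_zero_of_primitive_indicator hA hθ, add_zero])
  have h_cont : Continuous θ := (lipschitzWith_one_of_primitive_indicator hA hθ).continuous
  have h_window (n : ℕ) : volume (A ∩ Ioc (-n : ℝ) n) ≤ volume (range θ) := by
    have hn : (-n : ℝ) ≤ n := by simp
    have h_ivt : Icc (θ (-n)) (θ n) ⊆ range θ :=
      (intermediate_value_Icc hn h_cont.continuousOn).trans (image_subset_range _ _)
    calc volume (A ∩ Ioc (-n : ℝ) n) = volume (Icc (θ (-n)) (θ n)) := by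
          rw [Real.volume_Icc, sub_eq_volume_real_of_primitive_indicator hA hθ hn,
            ofReal_measureReal (measure_inter_lt_top_of_right_ne_top measure_Ioc_lt_top.ne).ne]
      _ ≤ volume (range θ) := measure_mono h_ivt
  have h_mono : Monotone fun n : ℕ => A ∩ Ioc (-n : ℝ) n := fun m n hmn =>
    inter_subset_inter_right _ (Ioc_subset_Ioc (by simpa using hmn) (by simpa using hmn))
  have h_cover : ⋃ n : ℕ, A ∩ Ioc (-n : ℝ) n = A := by
    refine (iUnion_subset fun _ => inter_subset_left).antisymm fun x hx => ?_
    obtain ⟨n, hn⟩ := exists_nat_gt |x|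
    exact mem_iUnion.2 ⟨n, hx, (abs_lt.mp hn).1, (abs_lt.mp hn).2.le⟩
  calc volume A = ⨆ n : ℕ, volume (A ∩ Ioc (-n : ℝ) n) := by
        rw [← h_mono.directed_le.measure_iUnion, h_cover]
    _ ≤ volume (θ '' A) := iSup_le fun n => (h_window n).trans h_range

end PrimitiveOfIndicator

theorem stmt_5 (A : Set ℝ) (hA : MeasurableSet A) (hpos : 0 < volume A)
    (θ : ℝ → ℝ)
    (hθ : ∀ t, θ t = ∫ s in (0 : ℝ)..t, A.indicator (fun _ => (1 : ℝ)) s) :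
    Monotone θ ∧ LipschitzWith 1 θ ∧ 0 < volume (θ '' A) :=
  ⟨monotone_of_primitive_indicator hA hθ, lipschitzWith_one_of_primitive_indicator hA hθ,
    hpos.trans_le (volume_le_volume_image_of_primitive_indicator hA hθ)⟩
end

section
/- Let X be a compact metric space with a continuous semi-flow φ, and let Y ⊆ X be a compact positively invariant subset such that every orbit of X eventually enters Y, in the sense that X_∞ := ⋂_{k∈ℕ} φᵏ(X) ⊆ Y. Then every chain recurrent point of (X, φ) lies in X_∞. -/
/-! The last flow segment of an `(ε, T)`-chain ending at `x` has length at least `T`, so `x` lies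
within `ε` of `φ_τ(X) ⊆ φ_t(X)` for every `t ≤ T`. A chain recurrent point is therefore in the
closure of every `φ_t(X)`, and these sets are compact, hence closed. -/

/-- An `(ε,T)`-chain of the semi-flow `φ` from `x` to `y`: finitely many flow
segments of duration at least `T`, separated by jumps of size at most `ε`. -/
def IsETChain {X : Type*} [MetricSpace X] (φ : ℝ → X → X) (ε T : ℝ) (x y : X) : Prop :=
  ∃ (n : ℕ) (p : Fin (n + 2) → X) (τ : Fin (n + 1) → ℝ),
    p 0 = x ∧ p (Fin.last (n + 1)) = y ∧
    (∀ i, T ≤ τ i) ∧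
    (∀ i : Fin (n + 1), dist (φ (τ i) (p i.castSucc)) (p i.succ) ≤ ε)

/-- The chain relation: `x C y` iff for every `ε > 0` and `T > 0` there is an
`(ε,T)`-chain from `x` to `y`. -/
def ChainRel {X : Type*} [MetricSpace X] (φ : ℝ → X → X) (x y : X) : Prop :=
  ∀ ε > 0, ∀ T > 0, IsETChain φ ε T x y

open Set

section

variable {X : Type*} {φ : ℝ → X → X}

lemma flow_mem_range_of_le (hadd : ∀ s t : ℝ, 0 ≤ s → 0 ≤ t → ∀ x, φ (s + t) x = φ s (φ t x))
    {t s : ℝ} (ht : 0 ≤ t) (hts : t ≤ s) (z : X) : φ s z ∈ range (φ t) :=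
  ⟨φ (s - t) z, by rw [← hadd t (s - t) ht (sub_nonneg.2 hts), add_sub_cancel]⟩

variable [MetricSpace X]

lemma IsETChain.exists_dist_flow_le {ε T : ℝ} {x y : X} (h : IsETChain φ ε T x y) :
    ∃ z, ∃ τ ≥ T, dist (φ τ z) y ≤ ε := by
  obtain ⟨n, p, τ, -, hlast, hτ, hjump⟩ := h
  refine ⟨p (Fin.last n).castSucc, τ (Fin.last n), hτ _, ?_⟩
  simpa only [Fin.succ_last, hlast] using hjump (Fin.last n)

lemma ChainRel.mem_closure_range_flow
    (hadd : ∀ s t : ℝ, 0 ≤ s → 0 ≤ t → ∀ x, φ (s + t) x = φ s (φ t x))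
    {w x : X} (h : ChainRel φ w x) {t : ℝ} (ht : 0 ≤ t) : x ∈ closure (range (φ t)) := by
  refine Metric.mem_closure_iff.2 fun ε hε => ?_
  obtain ⟨z, τ, hτ, hdist⟩ :=
    (h (ε / 2) (half_pos hε) (t + 1) (by linarith)).exists_dist_flow_le
  exact ⟨φ τ z, flow_mem_range_of_le hadd ht (by linarith) z, by rw [dist_comm]; linarith⟩

end

theorem stmt_13_general {X : Type*} [MetricSpace X] [CompactSpace X]
    (φ : ℝ → X → X)
    (hcont : Continuous (fun q : ℝ × X => φ q.1 q.2))
    (hadd : ∀ s t : ℝ, 0 ≤ s → 0 ≤ t → ∀ x, φ (s + t) x = φ s (φ t x))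
    (Xinf : Set X) (hXinf : Xinf = ⋂ k : ℕ, φ k '' Set.univ) :
    ∀ x : X, ChainRel φ x x → x ∈ Xinf := by
  intro x hx
  subst hXinf
  refine mem_iInter.2 fun k => ?_
  have hclosed : IsClosed (range (φ k)) :=
    (isCompact_range (hcont.comp (continuous_const.prodMk continuous_id))).isClosed
  rw [image_univ, ← hclosed.closure_eq]
  exact hx.mem_closure_range_flow hadd k.cast_nonneg

theorem stmt_13 {X : Type*} [MetricSpace X] [CompactSpace X]
    (φ : ℝ → X → X)
    (hcont : Continuous (fun q : ℝ × X => φ q.1 q.2))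
    (hzero : ∀ x, φ 0 x = x)
    (hadd : ∀ s t : ℝ, 0 ≤ s → 0 ≤ t → ∀ x, φ (s + t) x = φ s (φ t x))
    (Y : Set X) (hYc : IsCompact Y)
    (hYinv : ∀ t : ℝ, 0 ≤ t → ∀ y ∈ Y, φ t y ∈ Y)
    (Xinf : Set X) (hXinf : Xinf = ⋂ k : ℕ, φ k '' Set.univ)
    (hYabs : Xinf ⊆ Y) :
    ∀ x : X, ChainRel φ x x → x ∈ Xinf :=
  stmt_13_general φ hcont hadd Xinf hXinf
end

section
/- Let X be a compact metric space with a continuous semi-flow φ, and let w : X → ℝ be continuous and nonincreasing along orbits (w(φᵗ(x)) ≤ w(x) for all t ≥ 0, x ∈ X). Suppose a < b are real numbers and T > 0 satisfy φᵀ({w ≤ b}) ⊆ {w ≤ a}. Then there exists ε > 0 such that no (ε,T)-chain starting at a point x with w(x) ≤ a can end at a point y with w(y) ≥ b. In particular, if w(x) < a < b < w(y) then x does not chain-connect to y in X. -/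
/-!
Along a chain, `w` stays below the midpoint `m = (a + b) / 2`: a flow segment of duration
`≥ T` from a point with `w ≤ m ≤ b` lands in `{w ≤ a}`, and a jump shorter than the modulus
of uniform continuity of `w` for `(b - a) / 2` cannot lift `w` from `≤ a` above `m`.
-/

theorem IsETChain.of_forall_jump {X : Type*} [MetricSpace X] {φ : ℝ → X → X} {ε T : ℝ}
    {P : X → Prop} {x y : X}
    (hP : ∀ p, P p → ∀ τ, T ≤ τ → ∀ q, dist (φ τ p) q ≤ ε → P q)
    (h : IsETChain φ ε T x y) (hx : P x) : P y := by
  obtain ⟨n, p, τ, rfl, rfl, hτ, hjump⟩ := h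
  have hchain : ∀ i, P (p i) := by
    intro i
    induction i using Fin.induction with
    | zero => exact hx
    | succ i ih => exact hP _ ih _ (hτ i) _ (hjump i)
  exact hchain _

theorem flow_le_of_le_duration {X : Type*} {φ : ℝ → X → X} {T : ℝ} {w : X → ℝ} {a b : ℝ}
    (hadd : ∀ s t : ℝ, 0 ≤ s → 0 ≤ t → ∀ x, φ (s + t) x = φ s (φ t x))
    (hwdec : ∀ t : ℝ, 0 ≤ t → ∀ x, w (φ t x) ≤ w x) (hT : 0 < T)
    (hTab : ∀ x, w x ≤ b → w (φ T x) ≤ a) {x : X} (hx : w x ≤ b) {τ : ℝ} (hτ : T ≤ τ) :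
    w (φ τ x) ≤ a := by
  calc w (φ τ x) = w (φ (τ - T) (φ T x)) := by
        rw [← hadd _ _ (sub_nonneg.2 hτ) hT.le, sub_add_cancel]
    _ ≤ w (φ T x) := hwdec _ (sub_nonneg.2 hτ) _
    _ ≤ a := hTab x hx

theorem stmt_14_general {X : Type*} [MetricSpace X] [CompactSpace X]
    (φ : ℝ → X → X)
    (hadd : ∀ s t : ℝ, 0 ≤ s → 0 ≤ t → ∀ x, φ (s + t) x = φ s (φ t x))
    (w : X → ℝ) (hwcont : Continuous w)
    (hwdec : ∀ t : ℝ, 0 ≤ t → ∀ x, w (φ t x) ≤ w x)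
    (a b : ℝ) (hab : a < b) (T : ℝ) (hT : 0 < T)
    (hTab : ∀ x, w x ≤ b → w (φ T x) ≤ a) :
    (∃ ε > 0, ∀ x y : X, w x ≤ a → b ≤ w y → ¬ IsETChain φ ε T x y) ∧
    (∀ x y : X, w x < a → b < w y → ¬ ChainRel φ x y) := by
  obtain ⟨δ, hδ, hwδ⟩ := Metric.uniformContinuous_iff.1
    (CompactSpace.uniformContinuous_of_continuous hwcont) ((b - a) / 2) (by linarith)
  have hinvariant : ∀ p, w p ≤ (a + b) / 2 → ∀ τ, T ≤ τ → ∀ q,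
      dist (φ τ p) q ≤ δ / 2 → w q ≤ (a + b) / 2 := by
    intro p hp τ hτ q hq
    have hflow : w (φ τ p) ≤ a := flow_le_of_le_duration hadd hwdec hT hTab (by linarith) hτ
    have hjump : |w (φ τ p) - w q| < (b - a) / 2 := by
      simpa only [Real.dist_eq] using hwδ (by linarith : dist (φ τ p) q < δ)
    linarith [(abs_lt.1 hjump).1]
  have hno_chain : ∀ x y : X, w x ≤ a → b ≤ w y → ¬ IsETChain φ (δ / 2) T x y :=
    fun x y hx hy hchain => by
      have := hchain.of_forall_jump (P := fun z => w z ≤ (a + b) / 2) hinvariant (by linarith)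
      linarith
  exact ⟨⟨δ / 2, by linarith, hno_chain⟩, fun x y hx hy hrel =>
    hno_chain x y hx.le hy.le (hrel (δ / 2) (by linarith) T hT)⟩

theorem stmt_14 {X : Type*} [MetricSpace X] [CompactSpace X]
    (φ : ℝ → X → X)
    (hcont : Continuous (fun q : ℝ × X => φ q.1 q.2))
    (hzero : ∀ x, φ 0 x = x)
    (hadd : ∀ s t : ℝ, 0 ≤ s → 0 ≤ t → ∀ x, φ (s + t) x = φ s (φ t x))
    (w : X → ℝ) (hwcont : Continuous w)
    (hwdec : ∀ t : ℝ, 0 ≤ t → ∀ x, w (φ t x) ≤ w x)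
    (a b : ℝ) (hab : a < b) (T : ℝ) (hT : 0 < T)
    (hTab : ∀ x, w x ≤ b → w (φ T x) ≤ a) :
    (∃ ε > 0, ∀ x y : X, w x ≤ a → b ≤ w y → ¬ IsETChain φ ε T x y) ∧
    (∀ x y : X, w x < a → b < w y → ¬ ChainRel φ x y) :=
  stmt_14_general φ hadd w hwcont hwdec a b hab T hT hTab
end

section
/- Let X be a compact metric space with a continuous semi-flow φ. Let x_k : [0, T_k] → X be a sequence of (ε_k, T'_k)-chains of φ with ε_k → 0 and T'_k → ∞, such that x_k(0) → x and x_k(T_k) → y. Then x C y, i.e., for every ε > 0 and T > 0 there exists an (ε,T)-chain from x to y. -/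
namespace IsETChain

variable {X : Type*} [MetricSpace X] {φ : ℝ → X → X} {ε T : ℝ} {x y : X}

theorem mono {ε' T' : ℝ} (h : IsETChain φ ε T x y) (hε : ε ≤ ε') (hT : T' ≤ T) :
    IsETChain φ ε' T' x y := by
  obtain ⟨n, p, τ, hp0, hpl, hτ, hjump⟩ := h
  exact ⟨n, p, τ, hp0, hpl, fun i => hT.trans (hτ i), fun i => (hjump i).trans hε⟩

theorem cons {t : ℝ} {z : X} (h : IsETChain φ ε T z y) (ht : T ≤ t)
    (hjump₀ : dist (φ t x) z ≤ ε) : IsETChain φ ε T x y := by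
  obtain ⟨n, p, τ, hp0, hpl, hτ, hjump⟩ := h
  refine ⟨n + 1, Fin.cons x p, Fin.cons t τ, rfl, ?_, ?_, ?_⟩
  · rw [← Fin.succ_last, Fin.cons_succ, hpl]
  · exact Fin.forall_fin_succ.2 ⟨ht, hτ⟩
  · refine Fin.forall_fin_succ.2 ⟨by simpa [hp0] using hjump₀, fun i => ?_⟩
    simpa [← Fin.succ_castSucc] using hjump i

theorem replace_last {y' : X} {δ : ℝ} (h : IsETChain φ ε T x y) (hy : dist y y' ≤ δ) :
    IsETChain φ (ε + δ) T x y' := by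
  obtain ⟨n, p, τ, hp0, hpl, hτ, hjump⟩ := h
  refine ⟨n, Function.update p (Fin.last _) y', τ, ?_, by simp, hτ, fun i => ?_⟩
  · rwa [Function.update_of_ne Fin.last_pos.ne]
  rw [Function.update_of_ne (Fin.castSucc_lt_last i).ne]
  by_cases hi : i.succ = Fin.last _
  · rw [hi, Function.update_self]
    calc dist (φ (τ i) (p i.castSucc)) y'
        ≤ dist (φ (τ i) (p i.castSucc)) y + dist y y' := dist_triangle _ _ _
      _ ≤ ε + δ := add_le_add (hpl ▸ hi ▸ hjump i) hy
  · rw [Function.update_of_ne hi]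
    linarith [hjump i, dist_nonneg.trans hy]

theorem flow_start {s : ℝ}
    (hadd : ∀ s t : ℝ, 0 ≤ s → 0 ≤ t → ∀ x, φ (s + t) x = φ s (φ t x))
    (h : IsETChain φ ε (s + T) x y) (hs : 0 ≤ s) (hT : 0 ≤ T) :
    IsETChain φ ε T (φ s x) y := by
  obtain ⟨n, p, τ, hp0, hpl, hτ, hjump⟩ := h
  refine ⟨n, Function.update p 0 (φ s x), Function.update τ 0 (τ 0 - s), by simp, ?_, ?_, ?_⟩
  · rwa [Function.update_of_ne Fin.last_pos.ne']
  · intro i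
    rcases eq_or_ne i 0 with rfl | hi
    · simp only [Function.update_self]
      linarith [hτ 0]
    · rw [Function.update_of_ne hi]
      linarith [hτ i]
  · intro i
    rw [Function.update_of_ne (Fin.succ_ne_zero i)]
    rcases eq_or_ne i 0 with rfl | hi
    · have hflow : φ (τ 0 - s) (φ s x) = φ (τ 0) (p 0) := by
        rw [← hadd _ _ (by linarith [hτ 0]) hs, sub_add_cancel, hp0]
      simpa [hflow] using hjump 0
    · rw [Function.update_of_ne hi, Function.update_of_ne (Fin.castSucc_ne_zero_iff.2 hi)]
      exact hjump i

end IsETChain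

theorem stmt_15_general {X : Type*} [MetricSpace X]
    (φ : ℝ → X → X)
    (hcont : Continuous (fun q : ℝ × X => φ q.1 q.2))
    (hadd : ∀ s t : ℝ, 0 ≤ s → 0 ≤ t → ∀ x, φ (s + t) x = φ s (φ t x))
    (ε T : ℕ → ℝ) (a b : ℕ → X) (x y : X)
    (hchain : ∀ k, IsETChain φ (ε k) (T k) (a k) (b k))
    (hε : Filter.Tendsto ε Filter.atTop (nhds 0))
    (hT : Filter.Tendsto T Filter.atTop Filter.atTop)
    (ha : Filter.Tendsto a Filter.atTop (nhds x))
    (hb : Filter.Tendsto b Filter.atTop (nhds y)) :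
    ChainRel φ x y := by
  intro e he t ht
  have hφa : Filter.Tendsto (fun k => φ t (a k)) Filter.atTop (nhds (φ t x)) :=
    ((hcont.comp (Continuous.prodMk_right t)).tendsto x).comp ha
  obtain ⟨k, ⟨⟨hεk, hTk⟩, hak⟩, hbk⟩ :=
    (((hε.eventually (ge_mem_nhds (half_pos he))).and (hT.eventually_ge_atTop (t + t))).and
      (Metric.tendsto_nhds.1 hφa e he)).and (Metric.tendsto_nhds.1 hb (e / 2) (half_pos he))
      |>.exists
  have hchain' : IsETChain φ e (t + t) (a k) y :=
    ((hchain k).replace_last hbk.le).mono (by linarith) hTk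
  exact (hchain'.flow_start hadd ht.le ht.le).cons le_rfl (dist_comm (φ t x) _ ▸ hak.le)

theorem stmt_15 {X : Type*} [MetricSpace X] [CompactSpace X]
    (φ : ℝ → X → X)
    (hcont : Continuous (fun q : ℝ × X => φ q.1 q.2))
    (hzero : ∀ x, φ 0 x = x)
    (hadd : ∀ s t : ℝ, 0 ≤ s → 0 ≤ t → ∀ x, φ (s + t) x = φ s (φ t x))
    (ε T : ℕ → ℝ) (a b : ℕ → X) (x y : X)
    (hchain : ∀ k, IsETChain φ (ε k) (T k) (a k) (b k))
    (hε : Filter.Tendsto ε Filter.atTop (nhds 0))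
    (hT : Filter.Tendsto T Filter.atTop Filter.atTop)
    (ha : Filter.Tendsto a Filter.atTop (nhds x))
    (hb : Filter.Tendsto b Filter.atTop (nhds y)) :
    ChainRel φ x y :=
  stmt_15_general φ hcont hadd ε T a b x y hchain hε hT ha hb
end

section
/- Let X be a set, h : X × X → ℝ satisfy the triangle inequality, and u : X → ℝ satisfy u(y) − u(x) ≤ h(x,y) for all x,y. Define x R y ⟺ u(y) − u(x) = h(x,y), and let A = {x : h(x,x) = 0}. Then for all x, y: (x R y and y R x) holds if and only if (x ∈ A, y ∈ A, and h(x,y) + h(y,x) = 0). -/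
/-!
Adding the two calibration equalities gives `h x y + h y x = 0`; conversely, once this sum
vanishes the two domination inequalities `u y - u x ≤ h x y` and `u x - u y ≤ h y x` are forced
to be equalities. Finally `0 ≤ h x x ≤ h x y + h y x` (domination at `(x, x)`, then the triangle
inequality), so a vanishing sum puts `x`, and symmetrically `y`, in the Aubry set.
-/

section Dominated

variable {X : Type*} {h : X → X → ℝ} {u : X → ℝ}

theorem self_nonneg_of_dominated (hdom : ∀ x y, u y - u x ≤ h x y) (x : X) : 0 ≤ h x x := by
  simpa using hdom x x

theorem self_eq_zero_of_add_swap_eq_zero (htri : ∀ x y z, h x z ≤ h x y + h y z)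
    (hdom : ∀ x y, u y - u x ≤ h x y) {x y : X} (hxy : h x y + h y x = 0) : h x x = 0 :=
  le_antisymm ((htri x y x).trans_eq hxy) (self_nonneg_of_dominated hdom x)

theorem calibrated_and_calibrated_swap_iff (hdom : ∀ x y, u y - u x ≤ h x y) (x y : X) :
    (u y - u x = h x y ∧ u x - u y = h y x) ↔ h x y + h y x = 0 := by
  constructor
  · rintro ⟨hxy, hyx⟩
    linarith
  · intro hsum
    have hxy := hdom x y
    have hyx := hdom y x
    constructor <;> linarith

end Dominated

theorem stmt_16 {X : Type*} (h : X → X → ℝ) (u : X → ℝ)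
    (htri : ∀ x y z, h x z ≤ h x y + h y z)
    (hdom : ∀ x y, u y - u x ≤ h x y)
    (A : Set X) (hA : A = {x | h x x = 0}) :
    ∀ x y : X,
      ((u y - u x = h x y) ∧ (u x - u y = h y x)) ↔
      (x ∈ A ∧ y ∈ A ∧ h x y + h y x = 0) := by
  subst hA
  intro x y
  rw [calibrated_and_calibrated_swap_iff hdom]
  refine ⟨fun hxy => ⟨?_, ?_, hxy⟩, fun ⟨_, _, hxy⟩ => hxy⟩
  · exact self_eq_zero_of_add_swap_eq_zero htri hdom hxy
  · exact self_eq_zero_of_add_swap_eq_zero htri hdom ((add_comm _ _).trans hxy)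
end

section
/- Let X be a compact metric space with a continuous flow φ (defined for all t ∈ ℝ). If x C y for the chain relation, then φᵗ(x) C φˢ(y) for all real t and s (not merely nonnegative ones). -/
/-!
Replacing the first point `x` of a chain by `φᵗ x` is absorbed into the first flow segment,
whose duration changes by `-t`. Replacing the last point `y` by `φˢ y` is absorbed into the
last segment, whose duration changes by `s`; its final jump is pushed forward by `φˢ`, which
keeps it small by continuity of `φˢ` at `y`. Starting from chains with durations at least
`T + |t|` (resp. `T + |s|`), the new durations stay at least `T`.
-/

section

variable {X : Type*} [MetricSpace X] {φ : ℝ → X → X}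

theorem IsETChain.flow_left (hadd : ∀ s t : ℝ, ∀ x, φ (s + t) x = φ s (φ t x))
    {ε T : ℝ} {x y : X} (t : ℝ) (h : IsETChain φ ε (T + |t|) x y) :
    IsETChain φ ε T (φ t x) y := by
  obtain ⟨n, p, τ, rfl, hpl, hτ, hjump⟩ := h
  refine ⟨n, Function.update p 0 (φ t (p 0)), Function.update τ 0 (τ 0 - t), by simp,
    by simp [hpl, Fin.last_pos.ne'], fun i => ?_, fun i => ?_⟩
  · rcases eq_or_ne i 0 with rfl | hi
    · simpa using (show T ≤ τ 0 - t by linarith [hτ 0, le_abs_self t])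
    · simpa [hi] using (hτ i).trans' (by linarith [abs_nonneg t])
  · rcases eq_or_ne i 0 with rfl | hi
    · have hflow : φ (τ 0 - t) (φ t (p 0)) = φ (τ 0) (p 0) := by rw [← hadd, sub_add_cancel]
      simpa [Fin.succ_ne_zero, hflow] using hjump 0
    · simpa [hi, Fin.succ_ne_zero] using hjump i

theorem IsETChain.flow_right (hadd : ∀ s t : ℝ, ∀ x, φ (s + t) x = φ s (φ t x))
    {δ ε T : ℝ} {x y : X} (s : ℝ) (hδε : δ ≤ ε)
    (hφs : ∀ z, dist z y ≤ δ → dist (φ s z) (φ s y) ≤ ε)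
    (h : IsETChain φ δ (T + |s|) x y) :
    IsETChain φ ε T x (φ s y) := by
  obtain ⟨n, p, τ, hp0, hpl, hτ, hjump⟩ := h
  have hcast (i : Fin (n + 1)) : i.castSucc ≠ Fin.last (n + 1) := (Fin.castSucc_lt_last i).ne
  refine ⟨n, Function.update p (Fin.last (n + 1)) (φ s y),
    Function.update τ (Fin.last n) (τ (Fin.last n) + s),
    by simp [hp0, Fin.last_pos.ne], by simp, fun i => ?_, fun i => ?_⟩
  · rcases eq_or_ne i (Fin.last n) with rfl | hi
    · simpa using (show T - s ≤ τ (Fin.last n) by linarith [hτ (Fin.last n), neg_abs_le s])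
    · simpa [hi] using (hτ i).trans' (by linarith [abs_nonneg s])
  · rcases eq_or_ne i (Fin.last n) with rfl | hi
    · have hflow : φ (τ (Fin.last n) + s) (p (Fin.last n).castSucc)
          = φ s (φ (τ (Fin.last n)) (p (Fin.last n).castSucc)) := by rw [add_comm, hadd]
      have hlast := hjump (Fin.last n)
      rw [Fin.succ_last, hpl] at hlast
      simpa [hcast, hflow] using hφs _ hlast
    · have hsucc : i.succ ≠ Fin.last (n + 1) := by
        simpa [← Fin.succ_last] using hi
      simpa [hi, hcast, hsucc] using (hjump i).trans hδε

theorem ChainRel.flow_left (hadd : ∀ s t : ℝ, ∀ x, φ (s + t) x = φ s (φ t x))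
    {x y : X} (h : ChainRel φ x y) (t : ℝ) : ChainRel φ (φ t x) y :=
  fun ε hε T hT => (h ε hε (T + |t|) (by positivity)).flow_left hadd t

theorem ChainRel.flow_right (hadd : ∀ s t : ℝ, ∀ x, φ (s + t) x = φ s (φ t x))
    {x y : X} (h : ChainRel φ x y) {s : ℝ} (hcont : ContinuousAt (φ s) y) :
    ChainRel φ x (φ s y) := by
  intro ε hε T hT
  obtain ⟨δ, hδ, hφs⟩ := Metric.continuousAt_iff.mp hcont ε hε
  refine (h (min (δ / 2) ε) (by positivity) (T + |s|) (by positivity)).flow_right hadd s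
    (min_le_right _ _) fun z hz => (hφs ?_).le
  linarith [min_le_left (δ / 2) ε]

end

theorem stmt_19_general {X : Type*} [MetricSpace X]
    (φ : ℝ → X → X)
    (hcont : Continuous (fun q : ℝ × X => φ q.1 q.2))
    (hadd : ∀ s t : ℝ, ∀ x, φ (s + t) x = φ s (φ t x))
    (x y : X) (hxy : ChainRel φ x y) :
    ∀ t s : ℝ, ChainRel φ (φ t x) (φ s y) := fun t s =>
  (hxy.flow_right hadd (hcont.comp (Continuous.prodMk_right s)).continuousAt).flow_left hadd t

theorem stmt_19 {X : Type*} [MetricSpace X] [CompactSpace X]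
    (φ : ℝ → X → X)
    (hcont : Continuous (fun q : ℝ × X => φ q.1 q.2))
    (hzero : ∀ x, φ 0 x = x)
    (hadd : ∀ s t : ℝ, ∀ x, φ (s + t) x = φ s (φ t x))
    (x y : X) (hxy : ChainRel φ x y) :
    ∀ t s : ℝ, ChainRel φ (φ t x) (φ s y) :=
  stmt_19_general φ hcont hadd x y hxy
end
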